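/- Assume SO(n,k,β) is friendly. Let k̄ be an algebraic closure of k and let A ∈ GL(n, k̄) be such that for every X ∈ SO(n,k,β) there exists X' ∈ SO(n,k,β) with A⁻¹·ι(X)·A = ι(X'). Then there is a nonzero α ∈ k̄ with Aᵀ·M̄·A = α·M̄ (i.e., A lies in the group of similitudes GO(n,k̄,β)), and there is a nonzero p ∈ k̄ with p² = α such that the matrix à = p⁻¹·A satisfies Ãᵀ·M̄·Ã = M̄; moreover, when n is odd, p can be chosen so that in addition det à = 1. -/

import Mathlib

/-!
Write `M̄` for `M` over `K`. For `X ∈ SO(n,k,β)` the conjugate `A⁻¹ X A` preserves `M̄`, so `X`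
preserves the form `A⁻ᵀ M̄ A⁻¹`, and therefore `M̄⁻¹ A⁻ᵀ M̄ A⁻¹` commutes with `SO(n,k,β)`.
Friendliness puts into `SO(n,k,β)`, for every pair of coordinates `s ≠ t`, a rotation of the
`(s,t)`-plane whose `2 × 2` block `Q` has `Q - 1` invertible and `Q₁₀ ≠ 0`; as `n > 2`, only scalars
commute with all of them. Hence `Aᵀ M̄ A = α M̄`, a square root `p` of `α` makes `p⁻¹ A` orthogonal,
its determinant is `±1`, and for odd `n` the sign can be corrected by replacing `p` with `-p`.
-/

open Matrix Function

lemma Fintype.exists_ne_ne_of_two_lt_card {ι : Type*} [Fintype ι] (hι : 2 < Fintype.card ι)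
    (i j : ι) : ∃ u, u ≠ i ∧ u ≠ j := by
  classical
  have hcard : ({i, j} : Finset ι).card < (Finset.univ : Finset ι).card :=
    (Finset.card_le_two (a := i) (b := j)).trans_lt (by rwa [Finset.card_univ])
  obtain ⟨u, -, hu⟩ := Finset.exists_mem_notMem_of_card_lt_card hcard
  simp only [Finset.mem_insert, Finset.mem_singleton, not_or] at hu
  exact ⟨u, hu⟩

namespace Matrix

variable {ι κ α R : Type*} [CommRing R]

section
variable [Fintype ι] [DecidableEq ι]

lemma mul_submatrix_id_one (X : Matrix α ι R) (e : κ → ι) :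
    X * (1 : Matrix ι ι R).submatrix id e = X.submatrix id e := by
  simpa using mul_submatrix_one (Equiv.refl ι) e X

lemma submatrix_one_id_mul (X : Matrix ι α R) (e : κ → ι) :
    (1 : Matrix ι ι R).submatrix e id * X = X.submatrix e id := by
  simpa using one_submatrix_mul e (Equiv.refl ι) X

lemma submatrix_one_id_mul_submatrix_id_one [DecidableEq κ] {e : κ → ι} (he : Injective e) :
    (1 : Matrix ι ι R).submatrix e id * (1 : Matrix ι ι R).submatrix id e = 1 := by
  rw [submatrix_one_id_mul, submatrix_submatrix]
  exact submatrix_one e he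

lemma eq_of_commute_diagonal [NoZeroDivisors R] {b : ι → R} {X : Matrix ι ι R}
    (h : Commute (diagonal b) X) {i j : ι} (hX : X i j ≠ 0) : b i = b j := by
  have := congrFun (congrFun h.eq i) j
  rw [diagonal_mul, mul_diagonal, mul_comm] at this
  exact mul_left_cancel₀ hX this

lemma commute_inv_mul_of_transpose_mul_mul_eq {F G X : Matrix ι ι R} (hF : IsUnit F.det)
    (hXF : Xᵀ * F * X = F) (hXG : Xᵀ * G * X = G) : Commute (F⁻¹ * G) X := by
  have hX : IsUnit (Xᵀ * F).det := by
    have hdet : X.det * F.det * X.det = F.det := by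
      simpa only [det_mul, det_transpose] using congrArg det hXF
    rw [det_mul, det_transpose]
    exact isUnit_of_mul_isUnit_left ((congrArg IsUnit hdet).mpr hF)
  calc F⁻¹ * G * X = (Xᵀ * F)⁻¹ * (Xᵀ * G * X) := by
        rw [← nonsing_inv_mul_cancel_left _ (F⁻¹ * G * X) hX]
        simp only [Matrix.mul_assoc, mul_nonsing_inv_cancel_left _ _ hF]
    _ = (Xᵀ * F)⁻¹ * (Xᵀ * F * (X * (F⁻¹ * G))) := by
        rw [hXG, ← Matrix.mul_assoc _ X, hXF, mul_nonsing_inv_cancel_left _ _ hF]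
    _ = X * (F⁻¹ * G) := nonsing_inv_mul_cancel_left _ _ hX

lemma transpose_mul_mul_eq_of_inv_mul_mul_eq {A X Y F : Matrix ι ι R} (hA : IsUnit A.det)
    (hY : A⁻¹ * X * A = Y) (hYF : Yᵀ * F * Y = F) :
    Xᵀ * (A⁻¹ᵀ * F * A⁻¹) * X = A⁻¹ᵀ * F * A⁻¹ := by
  have hX : X = A * Y * A⁻¹ := by
    rw [← hY, Matrix.mul_assoc, Matrix.mul_assoc, mul_nonsing_inv _ hA, Matrix.mul_one,
      mul_nonsing_inv_cancel_left _ _ hA]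
  have hAt : IsUnit Aᵀ.det := by rwa [det_transpose]
  rw [hX]
  simp only [Matrix.transpose_mul, transpose_nonsing_inv, Matrix.mul_assoc,
    nonsing_inv_mul_cancel_left _ _ hA, mul_nonsing_inv_cancel_left _ _ hAt]
  rw [← Matrix.mul_assoc F, ← Matrix.mul_assoc Yᵀ, ← Matrix.mul_assoc Yᵀ, hYF]

lemma det_eq_one_or_eq_neg_one_of_transpose_mul_mul_eq [NoZeroDivisors R] {A F : Matrix ι ι R}
    (hF : IsUnit F.det) (h : Aᵀ * F * A = F) : A.det = 1 ∨ A.det = -1 := by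
  rw [← sq_eq_one_iff]
  refine hF.mul_left_cancel ?_
  have hdet := congrArg det h
  rw [det_mul, det_mul, det_transpose] at hdet
  linear_combination hdet

end

section ExtendById
variable [DecidableEq ι] [Fintype κ] [DecidableEq κ]

/-- For injective `e`, the matrix acting as `Q` on the coordinates `e k` and as the identity on the
others. -/
def extendById (e : κ → ι) (Q : Matrix κ κ R) : Matrix ι ι R :=
  1 + (1 : Matrix ι ι R).submatrix id e * (Q - 1) * (1 : Matrix ι ι R).submatrix e id

lemma extendById_map {S : Type*} [CommRing S] (f : R →+* S) (e : κ → ι) (Q : Matrix κ κ R) :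
    (extendById e Q).map f = extendById e (Q.map f) := by
  simp [extendById, Matrix.map_add, Matrix.map_mul, Matrix.map_sub, ← submatrix_map]

variable [Fintype ι]

lemma det_extendById {e : κ → ι} (he : Injective e) (Q : Matrix κ κ R) :
    (extendById e Q).det = Q.det := by
  rw [extendById, det_one_add_mul_comm, ← Matrix.mul_assoc,
    submatrix_one_id_mul_submatrix_id_one he, Matrix.one_mul, add_sub_cancel]

lemma submatrix_extendById {e : κ → ι} (he : Injective e) (Q : Matrix κ κ R) :
    (extendById e Q).submatrix e e = Q := by
  have hVU := submatrix_one_id_mul_submatrix_id_one (R := R) he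
  calc (extendById e Q).submatrix e e
      = (1 : Matrix ι ι R).submatrix e id * extendById e Q *
          (1 : Matrix ι ι R).submatrix id e := by
        rw [submatrix_one_id_mul, mul_submatrix_id_one, submatrix_submatrix]; rfl
    _ = Q := by
        simp only [extendById, Matrix.mul_add, Matrix.add_mul, Matrix.mul_one, ← Matrix.mul_assoc,
          hVU]
        simp only [Matrix.mul_assoc, hVU, Matrix.mul_one, Matrix.one_mul]
        abel

lemma diagonal_mul_submatrix_id_one (d : ι → R) (e : κ → ι) :
    diagonal d * (1 : Matrix ι ι R).submatrix id e =
      (1 : Matrix ι ι R).submatrix id e * diagonal (d ∘ e) := by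
  ext i k
  by_cases h : i = e k <;> simp [h, one_apply]

lemma transpose_extendById_mul_diagonal_mul {e : κ → ι} (he : Injective e) {Q : Matrix κ κ R}
    {d : ι → R} (hQ : Qᵀ * diagonal (d ∘ e) * Q = diagonal (d ∘ e)) :
    (extendById e Q)ᵀ * diagonal d * extendById e Q = diagonal d := by
  set U := (1 : Matrix ι ι R).submatrix id e
  set V := (1 : Matrix ι ι R).submatrix e id
  set D₂ := diagonal (d ∘ e)
  have hVU : V * U = 1 := submatrix_one_id_mul_submatrix_id_one he
  have hDU : diagonal d * U = U * D₂ := diagonal_mul_submatrix_id_one d e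
  have hVD : V * diagonal d = D₂ * V := by
    simpa [U, V, D₂, transpose_submatrix, Matrix.transpose_mul] using congrArg transpose hDU
  have hR : (extendById e Q)ᵀ = 1 + U * (Qᵀ - 1) * V := by
    simp [extendById, Matrix.transpose_mul, transpose_submatrix, Matrix.mul_assoc, U, V]
  have hDU' : ∀ X : Matrix κ ι R, diagonal d * (U * X) = U * (D₂ * X) := fun X => by
    rw [← Matrix.mul_assoc, hDU, Matrix.mul_assoc]
  have hVU' : ∀ X : Matrix κ ι R, V * (U * X) = X := fun X => by
    rw [← Matrix.mul_assoc, hVU, Matrix.one_mul]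
  have hQ' : ∀ X : Matrix κ ι R, Qᵀ * (D₂ * (Q * X)) = D₂ * X := fun X => by
    rw [← Matrix.mul_assoc, ← Matrix.mul_assoc, hQ]
  rw [hR, show extendById e Q = 1 + U * (Q - 1) * V from rfl]
  simp only [Matrix.add_mul, Matrix.mul_add, Matrix.sub_mul, Matrix.mul_sub, Matrix.one_mul,
    Matrix.mul_one, Matrix.mul_assoc, hDU', hVD, hVU', hQ']
  abel

-- Row `i` of `extendById e Q` is that of `1`, so commuting with it forces `Q - 1` to kill the
-- row vector `B i ∘ e`.
lemma apply_eq_zero_of_commute_extendById {e : κ → ι} (he : Injective e) {Q : Matrix κ κ R}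
    (hQ : IsUnit (Q - 1)) {B : Matrix ι ι R} (hB : Commute B (extendById e Q)) {i : ι}
    (hi : i ∉ Set.range e) (k : κ) : B i (e k) = 0 := by
  set U := (1 : Matrix ι ι R).submatrix id e
  set V := (1 : Matrix ι ι R).submatrix e id
  have hVU : V * U = 1 := submatrix_one_id_mul_submatrix_id_one he
  have hcomm : B * (U * (Q - 1) * V) = U * (Q - 1) * V * B := by
    have := hB.eq
    rwa [show extendById e Q = 1 + U * (Q - 1) * V from rfl, Matrix.mul_add, Matrix.add_mul,
      Matrix.mul_one, Matrix.one_mul, add_right_inj] at this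
  have hBU : B * U * (Q - 1) = U * ((Q - 1) * V * B * U) := by
    simpa only [Matrix.mul_assoc, hVU, Matrix.mul_one] using congrArg (· * U) hcomm
  have hUi : ∀ l, U i l = 0 := fun l => one_apply_ne fun h => hi ⟨l, h.symm⟩
  have hrow : ∀ l, (B * U * (Q - 1) : Matrix ι κ R) i l = 0 := fun l => by
    rw [hBU, Matrix.mul_apply]
    simp only [hUi, zero_mul, Finset.sum_const_zero]
  have hQ' : IsUnit (Q - 1).det := (isUnit_iff_isUnit_det _).mp hQ
  calc B i (e k) = (B * U) i k := by rw [mul_submatrix_id_one]; rfl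
    _ = (B * U * (Q - 1) * (Q - 1)⁻¹ : Matrix ι κ R) i k := by
      rw [mul_nonsing_inv_cancel_right _ _ hQ']
    _ = 0 := by simp only [Matrix.mul_apply, hrow, zero_mul, Finset.sum_const_zero]

end ExtendById

theorem exists_eq_smul_one_of_commute_extendById [Fintype ι] [DecidableEq ι] [NoZeroDivisors R]
    (hι : 2 < Fintype.card ι) {B : Matrix ι ι R}
    (h : ∀ s t : ι, s ≠ t → ∃ Q : Matrix (Fin 2) (Fin 2) R,
      IsUnit (Q - 1) ∧ Q 1 0 ≠ 0 ∧ Commute B (extendById ![s, t] Q)) :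
    ∃ c : R, B = c • 1 := by
  have hdiag : B.IsDiag := fun i j hij => by
    obtain ⟨u, hui, huj⟩ := Fintype.exists_ne_ne_of_two_lt_card hι i j
    obtain ⟨Q, hQ, -, hBQ⟩ := h j u huj.symm
    have hi : i ∉ Set.range ![j, u] := by simp [hij, hui.symm]
    simpa using
      apply_eq_zero_of_commute_extendById (injective_pair_iff_ne.mpr huj.symm) hQ hBQ hi 0
  have hconst : ∀ s t, B s s = B t t := fun s t => by
    obtain rfl | hst := eq_or_ne s t
    · rfl
    obtain ⟨Q, -, hQ, hBQ⟩ := h s t hst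
    rw [← hdiag.diagonal_diag] at hBQ
    have hts : extendById ![s, t] Q t s = Q 1 0 := by
      simpa using congrFun (congrFun (submatrix_extendById (injective_pair_iff_ne.mpr hst) Q) 1) 0
    exact (eq_of_commute_diagonal hBQ (hts ▸ hQ)).symm
  obtain ⟨i₀⟩ : Nonempty ι := Fintype.card_pos_iff.mp (by omega)
  refine ⟨B i₀ i₀, ?_⟩
  ext i j
  obtain rfl | hij := eq_or_ne i j
  · simp [hconst i i₀]
  · simp [hdiag hij, hij]

def planeRotation (r x y : R) : Matrix (Fin 2) (Fin 2) R :=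
  !![x, -(r * y); y, x]

lemma det_planeRotation (r x y : R) : (planeRotation r x y).det = x ^ 2 + r * y ^ 2 := by
  rw [det_fin_two, planeRotation]
  simp only [of_apply, cons_val', cons_val_zero, cons_val_one, cons_val_fin_one]
  ring

lemma transpose_planeRotation_mul_diagonal_mul {r x y : R} (h : x ^ 2 + r * y ^ 2 = 1)
    (a : R) :
    (planeRotation r x y)ᵀ * diagonal ![a, r * a] * planeRotation r x y =
      diagonal ![a, r * a] := by
  ext i j
  fin_cases i <;> fin_cases j <;> simp [planeRotation, Matrix.mul_apply, Fin.sum_univ_two] <;>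
    first | linear_combination a * h | linear_combination r * a * h | ring1

section Field

variable {K : Type*} [Field K]

lemma isUnit_planeRotation_sub_one (h2 : (2 : K) ≠ 0) {r x y : K}
    (hr : r ≠ 0) (hy : y ≠ 0) (h : x ^ 2 + r * y ^ 2 = 1) : IsUnit (planeRotation r x y - 1) := by
  have hx : x ≠ 1 := by
    rintro rfl
    exact mul_ne_zero hr (pow_ne_zero 2 hy) (by linear_combination h)
  rw [isUnit_iff_isUnit_det, isUnit_iff_ne_zero, det_fin_two]
  simp only [planeRotation, Fin.isValue, sub_apply, of_apply, cons_val', cons_val_zero,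
    cons_val_fin_one, one_apply_eq, cons_val_one, ne_eq, zero_ne_one, not_false_eq_true,
    one_apply_ne, sub_zero, one_ne_zero, neg_mul, sub_neg_eq_add]
  rw [show (x - 1) * (x - 1) + r * y * y = 2 * (1 - x) by linear_combination h]
  exact mul_ne_zero h2 (sub_ne_zero.mpr hx.symm)

lemma transpose_extendById_planeRotation_mul_diagonal_mul [Fintype ι] [DecidableEq ι]
    {d : ι → K} {s t : ι} (hst : s ≠ t) (hs : d s ≠ 0) {x y : K}
    (h : x ^ 2 + d t / d s * y ^ 2 = 1) :
    (extendById ![s, t] (planeRotation (d t / d s) x y))ᵀ * diagonal d *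
      extendById ![s, t] (planeRotation (d t / d s) x y) = diagonal d := by
  refine transpose_extendById_mul_diagonal_mul (injective_pair_iff_ne.mpr hst) ?_
  have hd : d ∘ ![s, t] = ![d s, d t / d s * d s] := by
    rw [div_mul_cancel₀ _ hs]
    ext k
    fin_cases k <;> rfl
  rw [hd]
  exact transpose_planeRotation_mul_diagonal_mul h (d s)

lemma IsDiag.apply_self_ne_zero [Fintype ι] [DecidableEq ι] {M : Matrix ι ι K} (hM : M.IsDiag)
    (hdet : IsUnit M.det) (i : ι) : M i i ≠ 0 := fun hi => by
  rw [← hM.diagonal_diag, det_diagonal] at hdet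
  exact hdet.ne_zero (Finset.prod_eq_zero (Finset.mem_univ i) hi)

theorem exists_orthogonal_extendById [Fintype ι] [DecidableEq ι] (h2 : (2 : K) ≠ 0)
    {M : Matrix ι ι K} (hMdiag : M.IsDiag) (hM : IsUnit M.det) {s t : ι} (hst : s ≠ t) {x y : K}
    (hy : y ≠ 0) (hxy : x ^ 2 + M t t / M s s * y ^ 2 = 1) :
    ∃ Q : Matrix (Fin 2) (Fin 2) K, IsUnit (Q - 1) ∧ Q 1 0 ≠ 0 ∧
      (extendById ![s, t] Q)ᵀ * M * extendById ![s, t] Q = M ∧ (extendById ![s, t] Q).det = 1 := by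
  have hMii := hMdiag.apply_self_ne_zero hM
  refine ⟨planeRotation (M t t / M s s) x y,
    isUnit_planeRotation_sub_one h2 (div_ne_zero (hMii t) (hMii s)) hy hxy, hy, ?_, ?_⟩
  · have h := transpose_extendById_planeRotation_mul_diagonal_mul (d := M.diag) hst (hMii s) hxy
    rwa [hMdiag.diagonal_diag] at h
  · rw [det_extendById (injective_pair_iff_ne.mpr hst), det_planeRotation, hxy]

lemma transpose_mul_mul_eq_smul_of_inv_mul_eq_smul_one [Fintype ι] [DecidableEq ι] [Nonempty ι]
    {A F : Matrix ι ι K} (hA : IsUnit A.det) (hF : IsUnit F.det) {c : K}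
    (h : F⁻¹ * (A⁻¹ᵀ * F * A⁻¹) = c • 1) : c ≠ 0 ∧ Aᵀ * F * A = c⁻¹ • F := by
  have hAt : IsUnit Aᵀ.det := by rwa [det_transpose]
  have hscal : A⁻¹ᵀ * F * A⁻¹ = c • F := by
    rw [← mul_nonsing_inv_cancel_left _ (A⁻¹ᵀ * F * A⁻¹) hF, h, Matrix.mul_smul,
      Matrix.mul_one]
  have hF' : F = c • (Aᵀ * F * A) := by
    calc F = Aᵀ * (A⁻¹ᵀ * F * A⁻¹) * A := by
          simp only [transpose_nonsing_inv, Matrix.mul_assoc, nonsing_inv_mul _ hA,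
            Matrix.mul_one, mul_nonsing_inv_cancel_left _ _ hAt]
      _ = c • (Aᵀ * F * A) := by rw [hscal, Matrix.mul_smul, Matrix.smul_mul, Matrix.mul_assoc]
  have hc : c ≠ 0 := by
    rintro rfl
    rw [zero_smul] at hF'
    rw [hF', det_zero] at hF
    exact not_isUnit_zero hF
  refine ⟨hc, ?_⟩
  conv_rhs => rw [hF', smul_smul, inv_mul_cancel₀ hc, one_smul]

theorem exists_inv_smul_transpose_mul_mul_eq [Fintype ι] [DecidableEq ι] [IsAlgClosed K]
    {A F : Matrix ι ι K} (hF : IsUnit F.det) {α : K} (hα : α ≠ 0) (h : Aᵀ * F * A = α • F) :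
    ∃ p : K, p ≠ 0 ∧ p ^ 2 = α ∧ (p⁻¹ • A)ᵀ * F * (p⁻¹ • A) = F ∧
      (Odd (Fintype.card ι) → (p⁻¹ • A).det = 1) := by
  have horth : ∀ p : K, p ^ 2 = α → (p⁻¹ • A)ᵀ * F * (p⁻¹ • A) = F := fun p hp => by
    have hp0 : p ≠ 0 := by rintro rfl; exact hα (by simp [← hp])
    rw [transpose_smul, Matrix.smul_mul, Matrix.smul_mul, Matrix.mul_smul, h, smul_smul,
      smul_smul, ← hp]
    field_simp
    rw [one_smul]
  obtain ⟨p, hp⟩ := IsAlgClosed.exists_pow_nat_eq α two_pos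
  have hp0 : p ≠ 0 := by rintro rfl; exact hα (by simp [← hp])
  have hp' : (-p) ^ 2 = α := by rwa [neg_sq]
  rcases det_eq_one_or_eq_neg_one_of_transpose_mul_mul_eq hF (horth p hp) with hdet | hdet
  · exact ⟨p, hp0, hp, horth p hp, fun _ => hdet⟩
  · refine ⟨-p, neg_ne_zero.mpr hp0, hp', horth _ hp', fun hodd => ?_⟩
    rw [inv_neg, neg_smul, det_neg, hdet, hodd.neg_one_pow]
    ring

end Field

end Matrix

/-- If `Inn_A` (with `A ∈ GL(n, k̄)`) leaves `SO(n,k,β)` invariant, then `A` is a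
similitude of `β`, and a suitable scalar multiple `p⁻¹ • A` is orthogonal; when `n`
is odd, `p` may moreover be chosen so that `det (p⁻¹ • A) = 1`. -/
theorem inn_invariant_so_similitude {k K : Type*} [Field k] [Field K] [Algebra k K]
    [IsAlgClosure k K]
    (hchar : (2 : k) ≠ 0) {n : ℕ} (hn : 2 < n)
    (M : Matrix (Fin n) (Fin n) k) (hMdiag : M.IsDiag) (hM : IsUnit M)
    (hfriendly : ∀ s t : Fin n, ∃ x y : k, y ≠ 0 ∧ x ^ 2 + (M s s / M t t) * y ^ 2 = 1)
    (A : Matrix (Fin n) (Fin n) K) (hA : IsUnit A)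
    (hinv : ∀ X : Matrix (Fin n) (Fin n) k, Xᵀ * M * X = M → X.det = 1 →
      ∃ X' : Matrix (Fin n) (Fin n) k, X'ᵀ * M * X' = M ∧ X'.det = 1 ∧
        A⁻¹ * X.map (algebraMap k K) * A = X'.map (algebraMap k K)) :
    ∃ α : K, α ≠ 0 ∧
      Aᵀ * M.map (algebraMap k K) * A = α • M.map (algebraMap k K) ∧
      ∃ p : K, p ≠ 0 ∧ p ^ 2 = α ∧
        (p⁻¹ • A)ᵀ * M.map (algebraMap k K) * (p⁻¹ • A) = M.map (algebraMap k K) ∧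
        (Odd n → (p⁻¹ • A).det = 1) := by
  set φ := algebraMap k K
  have hMdet : IsUnit M.det := (isUnit_iff_isUnit_det M).mp hM
  have hMφ : IsUnit (M.map φ).det := by
    rw [← RingHom.mapMatrix_apply, ← RingHom.map_det]
    exact hMdet.map φ
  have hAdet : IsUnit A.det := (isUnit_iff_isUnit_det A).mp hA
  have hmap : ∀ X : Matrix (Fin n) (Fin n) k, Xᵀ * M * X = M →
      (X.map φ)ᵀ * M.map φ * X.map φ = M.map φ := fun X hX => by
    simpa only [Matrix.map_mul, transpose_map] using congrArg (Matrix.map · φ) hX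
  set C := (M.map φ)⁻¹ * (A⁻¹ᵀ * M.map φ * A⁻¹)
  have hcomm : ∀ X : Matrix (Fin n) (Fin n) k, Xᵀ * M * X = M → X.det = 1 →
      Commute C (X.map φ) := fun X hX hXdet => by
    obtain ⟨X', hX', -, hconj⟩ := hinv X hX hXdet
    exact commute_inv_mul_of_transpose_mul_mul_eq hMφ (hmap X hX)
      (transpose_mul_mul_eq_of_inv_mul_mul_eq hAdet hconj (hmap X' hX'))
  obtain ⟨c, hc⟩ := exists_eq_smul_one_of_commute_extendById (B := C) (by rwa [Fintype.card_fin])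
    fun s t hst => by
      obtain ⟨x, y, hy, hxy⟩ := hfriendly t s
      obtain ⟨Q, hQ, hQ10, hX, hXdet⟩ := exists_orthogonal_extendById hchar hMdiag hMdet hst hy hxy
      refine ⟨Q.map φ, by simpa [Matrix.map_sub] using hQ.map φ.mapMatrix,
        (map_ne_zero φ).mpr hQ10, ?_⟩
      rw [← extendById_map]
      exact hcomm _ hX hXdet
  have : Nonempty (Fin n) := ⟨⟨0, by omega⟩⟩
  have : IsAlgClosed K := IsAlgClosure.isAlgClosed k
  obtain ⟨hc0, hsim⟩ := transpose_mul_mul_eq_smul_of_inv_mul_eq_smul_one hAdet hMφ hc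
  obtain ⟨p, hp0, hp, horth, hdet⟩ :=
    exists_inv_smul_transpose_mul_mul_eq hMφ (inv_ne_zero hc0) hsim
  exact ⟨c⁻¹, inv_ne_zero hc0, hsim, p, hp0, hp, horth, by simpa using hdet⟩
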